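/- arXiv:1506.07052 — 5 statements merged into one kernel-verified Lean document; each statement's English description precedes it below -/
import Mathlib

section
/- Let R be a commutative noetherian ring and a ⊊ R a proper ideal, with ψ : R → R̂ the natural map to the a-adic completion. Then the map m ↦ mR̂ gives a bijection from the set of maximal ideals of R containing a onto the set of maximal ideals of R̂, with inverse given by contraction along ψ. -/
/-!
Since `a` is finitely generated, the projection `R̂ → R ⧸ a` is surjective with kernel `aR̂`, and
`R̂` is `aR̂`-adically complete, so `aR̂` lies in the Jacobson radical of `R̂`. Hence every maximal
ideal of `R̂` contains the kernel of `R̂ → R ⧸ a`, and the maximal ideals of `R` containing `a` and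
those of `R̂` both correspond to the maximal ideals of `R ⧸ a`.
-/

namespace Ideal

variable {A B C : Type*} [CommRing A] [CommRing B] [CommRing C]

lemma comap_map_eq_of_isMaximal {f : A →+* B} {m : Ideal A} (hm : m.IsMaximal)
    (hne : m.map f ≠ ⊤) : (m.map f).comap f = m :=
  (hm.eq_of_le (comap_ne_top f hne) le_comap_map).symm

lemma IsMaximal.comap_of_surjective_comp {f : A →+* B} {g : B →+* C}
    (hg : Function.Surjective g) (hgf : Function.Surjective (g.comp f)) {M : Ideal B}
    (hM : M.IsMaximal) (hker : RingHom.ker g ≤ M) : (M.comap f).IsMaximal := by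
  have := hM.map_of_surjective_of_ker_le hg hker
  have hM_eq : (M.map g).comap g = M := by
    rw [comap_map_of_surjective' g hg, sup_eq_left.mpr hker]
  rw [← hM_eq, comap_comap]
  exact comap_isMaximal_of_surjective _ hgf

end Ideal

namespace AdicCompletion

variable {R : Type*} [CommRing R] (I : Ideal R)

lemma map_algebraMap_le_jacobson_bot (fg : I.FG) :
    I.map (algebraMap R (AdicCompletion I R)) ≤ (⊥ : Ideal (AdicCompletion I R)).jacobson :=
  haveI := isAdicComplete_self I fg
  IsAdicComplete.le_jacobson_bot _

lemma ker_evalOneₐ_le_of_isMaximal (fg : I.FG) {M : Ideal (AdicCompletion I R)}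
    (hM : M.IsMaximal) : RingHom.ker (evalOneₐ I).toRingHom ≤ M := by
  rw [ker_evalOneₐ_eq_map I fg]
  exact (map_algebraMap_le_jacobson_bot I fg).trans (sInf_le ⟨bot_le, hM⟩)

lemma isMaximal_comap_algebraMap (fg : I.FG) {M : Ideal (AdicCompletion I R)}
    (hM : M.IsMaximal) : (M.comap (algebraMap R (AdicCompletion I R))).IsMaximal :=
  hM.comap_of_surjective_comp (evalOneₐ_surjective I)
    (by rw [evalOneₐ_comp_algebraMap_eq_mk]; exact Ideal.Quotient.mk_surjective)
    (ker_evalOneₐ_le_of_isMaximal I fg hM)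

lemma le_comap_algebraMap_of_isMaximal (fg : I.FG) {M : Ideal (AdicCompletion I R)}
    (hM : M.IsMaximal) : I ≤ M.comap (algebraMap R (AdicCompletion I R)) :=
  Ideal.map_le_iff_le_comap.mp <|
    (ker_evalOneₐ_eq_map I fg).ge.trans (ker_evalOneₐ_le_of_isMaximal I fg hM)

end AdicCompletion

theorem maximal_ideal_bijection_adicCompletion_general
    (R : Type*) [CommRing R] [IsNoetherianRing R] (a : Ideal R) :
    (∀ m : Ideal R, m.IsMaximal → a ≤ m →
      (m.map (algebraMap R (AdicCompletion a R))).IsMaximal ∧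
      (m.map (algebraMap R (AdicCompletion a R))).comap
        (algebraMap R (AdicCompletion a R)) = m) ∧
    (∀ M : Ideal (AdicCompletion a R), M.IsMaximal →
      (M.comap (algebraMap R (AdicCompletion a R))).IsMaximal ∧
      a ≤ M.comap (algebraMap R (AdicCompletion a R)) ∧
      (M.comap (algebraMap R (AdicCompletion a R))).map
        (algebraMap R (AdicCompletion a R)) = M) := by
  have fg : a.FG := a.fg_of_isNoetherianRing
  refine ⟨fun m hm ham => ?_, fun M hM => ?_⟩
  · have hmax := AdicCompletion.isMaximal_map_of_le a m ham fg
    exact ⟨hmax, Ideal.comap_map_eq_of_isMaximal hm hmax.ne_top⟩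
  · have hmax := AdicCompletion.isMaximal_comap_algebraMap a fg hM
    have hle := AdicCompletion.le_comap_algebraMap_of_isMaximal a fg hM
    exact ⟨hmax, hle,
      (AdicCompletion.isMaximal_map_of_le a _ hle fg).eq_of_le hM.ne_top Ideal.map_comap_le⟩

/-- The map `m ↦ m R̂` is a bijection from the set of maximal ideals of `R` containing `a`
onto the set of maximal ideals of the `a`-adic completion `R̂`, with inverse given by
contraction along the canonical map `ψ : R → R̂`. -/
theorem maximal_ideal_bijection_adicCompletion
    (R : Type*) [CommRing R] [IsNoetherianRing R] (a : Ideal R) (ha : a ≠ ⊤) :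
    (∀ m : Ideal R, m.IsMaximal → a ≤ m →
      (m.map (algebraMap R (AdicCompletion a R))).IsMaximal ∧
      (m.map (algebraMap R (AdicCompletion a R))).comap
        (algebraMap R (AdicCompletion a R)) = m) ∧
    (∀ M : Ideal (AdicCompletion a R), M.IsMaximal →
      (M.comap (algebraMap R (AdicCompletion a R))).IsMaximal ∧
      a ≤ M.comap (algebraMap R (AdicCompletion a R)) ∧
      (M.comap (algebraMap R (AdicCompletion a R))).map
        (algebraMap R (AdicCompletion a R)) = M) :=
  maximal_ideal_bijection_adicCompletion_general R a
end

section
/- Let R be a commutative noetherian ring, a a proper ideal, and M an a-torsion R-module (every element of M is annihilated by some power of a). Then the R-module structure on M extends uniquely to an R̂-module structure, where R̂ is the a-adic completion, and the natural map M → R̂ ⊗_R M is an isomorphism when M is also injective over R. -/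
open scoped TensorProduct

noncomputable section
universe u

/-- `M` is `a`-torsion: every element is annihilated by a power of `a`. -/
def IsAdicTorsion (R : Type u) [CommRing R] (a : Ideal R) (M : Type u)
    [AddCommGroup M] [Module R M] : Prop :=
  ∀ x : M, ∃ n : ℕ, ∀ r ∈ a ^ n, r • x = 0

/-!
An element `x ∈ R̂` acts on an element `m` killed by `aⁿ` as any `r ∈ R` with `r ≡ x` modulo
`aⁿ`. The projections `R̂ → R ⧸ aⁿ` are compatible, so this does not depend on `n`, and each
algebra axiom can be checked at one common level `n`, where it holds for the representatives.

Since `a` is finitely generated, `aⁿR̂` is the kernel of `R̂ → R ⧸ aⁿ`, so `x - r ∈ aⁿR̂`, and every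
`R`-bilinear `B` on `R̂ × M` satisfies `B x m = r • B 1 m`. For `B` an algebra map
`R̂ → End_R M` this is uniqueness; for `B = (· ⊗ₜ ·)` it shows that the action
`R̂ ⊗ M → M` inverts `m ↦ 1 ⊗ₜ m`.
-/

open Submodule Function

theorem Submodule.smul_eq_smul_of_mk_eq {R M : Type*} [CommRing R] [AddCommGroup M]
    [Module R M] {I : Ideal R} {m : M} (hm : m ∈ torsionBySet R M ↑I) {r s : R}
    (h : (Submodule.Quotient.mk r : R ⧸ (I • ⊤ : Ideal R)) = Submodule.Quotient.mk s) :
    r • m = s • m := by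
  have hrs : r - s ∈ I := by simpa using (Submodule.Quotient.eq _).1 h
  rw [← sub_eq_zero, ← sub_smul]
  exact (mem_torsionBySet_iff _ _).1 hm ⟨_, hrs⟩

namespace AdicCompletion

variable {R : Type*} [CommRing R] {a : Ideal R} {M N : Type*} [AddCommGroup M] [Module R M]
  [AddCommGroup N] [Module R N]

theorem smul_eq_smul_of_mk_eq_eval (x : AdicCompletion a R) {m : M} {n k : ℕ}
    (hn : m ∈ torsionBySet R M ↑(a ^ n)) (hk : m ∈ torsionBySet R M ↑(a ^ k)) {r s : R}
    (hr : Submodule.Quotient.mk r = eval a R n x) (hs : Submodule.Quotient.mk s = eval a R k x) :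
    r • m = s • m := by
  have hmin : m ∈ torsionBySet R M ↑(a ^ min n k) := by
    rcases min_choice n k with h | h <;> rwa [h]
  have mk_eq {t : R} {j : ℕ} (hj : min n k ≤ j) (ht : Submodule.Quotient.mk t = eval a R j x) :
      Submodule.Quotient.mk t = eval a R (min n k) x :=
    (congrArg (transitionMap a R hj) ht).trans (x.property hj)
  exact smul_eq_smul_of_mk_eq hmin
    ((mk_eq (min_le_left n k) hr).trans (mk_eq (min_le_right n k) hs).symm)

theorem mk_mul_eq_eval_mul {n : ℕ} {x y : AdicCompletion a R} {r s : R}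
    (hr : Submodule.Quotient.mk r = eval a R n x) (hs : Submodule.Quotient.mk s = eval a R n y) :
    (Submodule.Quotient.mk (r * s) : R ⧸ (a ^ n • ⊤ : Ideal R)) = eval a R n (x * y) := by
  rw [eval_apply, val_mul, ← eval_apply, ← eval_apply, ← hr, ← hs]
  rfl

theorem sub_algebraMap_mem_pow_smul_top (ha : a.FG) {x : AdicCompletion a R} {n : ℕ} {r : R}
    (hr : Submodule.Quotient.mk r = eval a R n x) :
    x - algebraMap R _ r ∈ (a ^ n • ⊤ : Submodule R (AdicCompletion a R)) := by
  rw [pow_smul_top_eq_ker_eval ha, LinearMap.mem_ker, map_sub, ← hr, sub_eq_zero]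
  rfl

theorem bilin_apply_eq_smul_apply_one (ha : a.FG) (B : AdicCompletion a R →ₗ[R] M →ₗ[R] N)
    {x : AdicCompletion a R} {m : M} {n : ℕ} (hm : m ∈ torsionBySet R M ↑(a ^ n)) {r : R}
    (hr : Submodule.Quotient.mk r = eval a R n x) :
    B x m = r • B 1 m := by
  have hker : ∀ y ∈ (a ^ n • ⊤ : Submodule R (AdicCompletion a R)), B y m = 0 := by
    intro y hy
    refine Submodule.smul_induction_on hy (fun c hc z _ => ?_) (fun u v hu hv => ?_)
    · rw [map_smul, LinearMap.smul_apply, ← map_smul, (mem_torsionBySet_iff _ _).1 hm ⟨c, hc⟩,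
        _root_.map_zero]
    · rw [map_add, LinearMap.add_apply, hu, hv, add_zero]
  calc B x m = B (algebraMap R _ r) m := by
        rw [← sub_eq_zero, ← LinearMap.sub_apply, ← map_sub]
        exact hker _ (sub_algebraMap_mem_pow_smul_top ha hr)
    _ = r • B 1 m := by rw [Algebra.algebraMap_eq_smul_one, map_smul, LinearMap.smul_apply]

end AdicCompletion

namespace IsAdicTorsion

open AdicCompletion

variable {R : Type u} [CommRing R] {a : Ideal R} {M : Type u} [AddCommGroup M] [Module R M]

theorem exists_mem_torsionBySet (htor : IsAdicTorsion R a M) (m : M) :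
    ∃ n, m ∈ torsionBySet R M ↑(a ^ n) := by
  obtain ⟨n, hn⟩ := htor m
  exact ⟨n, (mem_torsionBySet_iff _ _).2 fun c => hn c c.2⟩

variable (htor : IsAdicTorsion R a M)

/-- `x • m := r • m` for a lift `r ∈ R` of the image of `x` in `R ⧸ aⁿ`, for some `n` with
`aⁿ m = 0`; see `completionSMul_eq` for independence of the choices. -/
def completionSMul (x : AdicCompletion a R) (m : M) : M :=
  (Submodule.Quotient.mk_surjective _
    (eval a R (htor.exists_mem_torsionBySet m).choose x)).choose • m

theorem completionSMul_eq {x : AdicCompletion a R} {m : M} {n : ℕ}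
    (hm : m ∈ torsionBySet R M ↑(a ^ n)) {r : R} (hr : Submodule.Quotient.mk r = eval a R n x) :
    htor.completionSMul x m = r • m :=
  smul_eq_smul_of_mk_eq_eval x (htor.exists_mem_torsionBySet m).choose_spec hm
    (Submodule.Quotient.mk_surjective _ _).choose_spec hr

theorem completionSMul_add (x : AdicCompletion a R) (m m' : M) :
    htor.completionSMul x (m + m') = htor.completionSMul x m + htor.completionSMul x m' := by
  obtain ⟨n, hn⟩ := htor.exists_mem_torsionBySet m
  obtain ⟨k, hk⟩ := htor.exists_mem_torsionBySet m'
  have hn' := torsionBySet_le_torsionBySet_pow n (n + k) (Nat.le_add_right n k) a hn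
  have hk' := torsionBySet_le_torsionBySet_pow k (n + k) (Nat.le_add_left k n) a hk
  obtain ⟨r, hr⟩ := Submodule.Quotient.mk_surjective _ (eval a R (n + k) x)
  rw [htor.completionSMul_eq (add_mem hn' hk') hr, htor.completionSMul_eq hn' hr,
    htor.completionSMul_eq hk' hr, smul_add]

theorem completionSMul_smul (x : AdicCompletion a R) (c : R) (m : M) :
    htor.completionSMul x (c • m) = c • htor.completionSMul x m := by
  obtain ⟨n, hn⟩ := htor.exists_mem_torsionBySet m
  obtain ⟨r, hr⟩ := Submodule.Quotient.mk_surjective _ (eval a R n x)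
  rw [htor.completionSMul_eq (Submodule.smul_mem _ c hn) hr, htor.completionSMul_eq hn hr,
    smul_comm]

theorem completionSMul_algebraMap (c : R) (m : M) :
    htor.completionSMul (algebraMap R (AdicCompletion a R) c) m = c • m :=
  htor.completionSMul_eq (htor.exists_mem_torsionBySet m).choose_spec rfl

theorem add_completionSMul (x y : AdicCompletion a R) (m : M) :
    htor.completionSMul (x + y) m = htor.completionSMul x m + htor.completionSMul y m := by
  obtain ⟨n, hn⟩ := htor.exists_mem_torsionBySet m
  obtain ⟨r, hr⟩ := Submodule.Quotient.mk_surjective _ (eval a R n x)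
  obtain ⟨s, hs⟩ := Submodule.Quotient.mk_surjective _ (eval a R n y)
  have hrs : Submodule.Quotient.mk (r + s) = eval a R n (x + y) := by
    rw [Submodule.Quotient.mk_add, hr, hs, map_add]
  rw [htor.completionSMul_eq hn hrs, htor.completionSMul_eq hn hr, htor.completionSMul_eq hn hs,
    add_smul]

theorem mul_completionSMul (x y : AdicCompletion a R) (m : M) :
    htor.completionSMul (x * y) m = htor.completionSMul x (htor.completionSMul y m) := by
  obtain ⟨n, hn⟩ := htor.exists_mem_torsionBySet m
  obtain ⟨r, hr⟩ := Submodule.Quotient.mk_surjective _ (eval a R n x)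
  obtain ⟨s, hs⟩ := Submodule.Quotient.mk_surjective _ (eval a R n y)
  rw [htor.completionSMul_eq hn (mk_mul_eq_eval_mul hr hs), htor.completionSMul_eq hn hs,
    htor.completionSMul_eq (Submodule.smul_mem _ s hn) hr, mul_smul]

def completionAction : AdicCompletion a R →ₐ[R] Module.End R M where
  toFun x :=
    { toFun := htor.completionSMul x
      map_add' := htor.completionSMul_add x
      map_smul' := htor.completionSMul_smul x }
  map_one' := LinearMap.ext fun m => by
    simpa using htor.completionSMul_algebraMap 1 m
  map_mul' x y := LinearMap.ext fun m => htor.mul_completionSMul x y m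
  map_zero' := LinearMap.ext fun m => by
    simpa using htor.completionSMul_algebraMap 0 m
  map_add' x y := LinearMap.ext fun m => htor.add_completionSMul x y m
  commutes' c := LinearMap.ext fun m => htor.completionSMul_algebraMap c m

theorem completionAction_apply (x : AdicCompletion a R) (m : M) :
    htor.completionAction x m = htor.completionSMul x m :=
  rfl

theorem eq_completionAction (ha : a.FG) (ψ : AdicCompletion a R →ₐ[R] Module.End R M) :
    ψ = htor.completionAction := by
  refine AlgHom.ext fun x => LinearMap.ext fun m => ?_
  obtain ⟨n, hn⟩ := htor.exists_mem_torsionBySet m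
  obtain ⟨r, hr⟩ := Submodule.Quotient.mk_surjective _ (eval a R n x)
  calc ψ x m = r • ψ 1 m := bilin_apply_eq_smul_apply_one ha ψ.toLinearMap hn hr
    _ = htor.completionAction x m := by
      rw [map_one, Module.End.one_apply, completionAction_apply, htor.completionSMul_eq hn hr]

theorem bijective_tensorProduct_mk_one (htor : IsAdicTorsion R a M) (ha : a.FG) :
    Bijective (TensorProduct.mk R (AdicCompletion a R) M 1) := by
  let inv := TensorProduct.lift htor.completionAction.toLinearMap
  have hleft : inv ∘ₗ TensorProduct.mk R _ M 1 = LinearMap.id :=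
    LinearMap.ext fun m => by simp [inv]
  have hright : TensorProduct.mk R _ M 1 ∘ₗ inv = LinearMap.id := by
    refine TensorProduct.ext' fun x m => ?_
    obtain ⟨n, hn⟩ := htor.exists_mem_torsionBySet m
    obtain ⟨r, hr⟩ := Submodule.Quotient.mk_surjective _ (eval a R n x)
    simp only [inv, LinearMap.comp_apply, TensorProduct.lift.tmul, AlgHom.toLinearMap_apply,
      completionAction_apply, htor.completionSMul_eq hn hr, LinearMap.id_apply]
    rw [TensorProduct.mk_apply, TensorProduct.tmul_smul]
    exact (bilin_apply_eq_smul_apply_one ha (TensorProduct.mk R _ M) hn hr).symm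
  exact bijective_iff_has_inverse.2 ⟨inv, LinearMap.congr_fun hleft, LinearMap.congr_fun hright⟩

end IsAdicTorsion

theorem adicTorsion_module_structure_extends_general
    (R : Type u) [CommRing R] [IsNoetherianRing R] (a : Ideal R)
    (M : Type u) [AddCommGroup M] [Module R M] (htor : IsAdicTorsion R a M) :
    (∃! _ : AdicCompletion a R →ₐ[R] Module.End R M, True) ∧
    (Module.Injective R M →
      Function.Bijective ((TensorProduct.mk R (AdicCompletion a R) M) 1)) := by
  have ha : a.FG := a.fg_of_isNoetherianRing
  exact ⟨⟨htor.completionAction, trivial, fun ψ _ => htor.eq_completionAction ha ψ⟩,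
    fun _ => htor.bijective_tensorProduct_mk_one ha⟩

/-- Let `R` be commutative noetherian, `a` a proper ideal, and `M` an `a`-torsion `R`-module.
Then the `R`-module structure on `M` extends uniquely to a module structure over the `a`-adic
completion `R̂` (equivalently, there is a unique `R`-algebra homomorphism
`R̂ → End_R(M)`), and if moreover `M` is injective over `R` then the natural map
`M → R̂ ⊗_R M` is an isomorphism. -/
theorem adicTorsion_module_structure_extends
    (R : Type u) [CommRing R] [IsNoetherianRing R] (a : Ideal R) (ha : a ≠ ⊤)
    (M : Type u) [AddCommGroup M] [Module R M] (htor : IsAdicTorsion R a M) :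
    (∃! _ : AdicCompletion a R →ₐ[R] Module.End R M, True) ∧
    (Module.Injective R M →
      Function.Bijective ((TensorProduct.mk R (AdicCompletion a R) M) 1)) :=
  adicTorsion_module_structure_extends_general R a M htor

end
end

section
/- Let R be a commutative noetherian ring, a a proper ideal, and J an injective R-module that is a-torsion and satisfies Ass_R(J) ⊆ V(a). Then J, with its induced R̂-module structure (R̂ the a-adic completion), is an injective R̂-module. -/
/-!
By Baer's criterion it suffices to extend an `R̂`-linear map `f : 𝔞 → J` defined on an ideal `𝔞`
of `R̂` to all of `R̂`. The completion `R̂` is noetherian, being a quotient of a power series ring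
over `R`, so `𝔞` is finitely generated and `f(𝔞)` is killed by some `aⁿ`; by Artin–Rees, `f` then
vanishes on `𝔞 ∩ aᵐR̂` for some `m`. Hence `f` factors through
`𝔞 / (𝔞 ∩ aᵐR̂) ⊆ R̂ / aᵐR̂ ≅ R / aᵐ`, and injectivity of `J` over `R` extends it to an `R`-linear
map `h : R̂ / aᵐR̂ → J`. Since `aᵐ` kills `e = h 1`, so does `aᵐR̂`, and `x ↦ x • e` is the
required `R̂`-linear extension.
-/

noncomputable section
universe u

namespace AdicCompletion

section Functoriality

variable {A B : Type*} [CommRing A] [CommRing B] {I : Ideal A} {J : Ideal B}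

theorem factorPow_evalₐ {m n : ℕ} (hle : m ≤ n) (x : AdicCompletion I A) :
    Ideal.Quotient.factorPow I hle (evalₐ I n x) = evalₐ I m x := by
  obtain ⟨f, rfl⟩ := mk_surjective I A x
  have hf : f.val m - f.val n ∈ I ^ m := by simpa using SModEq.sub_mem.mp (f.property hle)
  simpa [evalₐ_mk, Ideal.Quotient.eq] using (I ^ m).neg_mem hf

theorem factorPow_quotientMap_evalₐ (φ : A →+* B) (h : I ≤ J.comap φ) {m n : ℕ} (hle : m ≤ n)
    (x : AdicCompletion I A) :
    Ideal.Quotient.factorPow J hle (Ideal.quotientMap (J ^ n) φ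
      ((Ideal.pow_right_mono h n).trans (Ideal.le_comap_pow φ n)) (evalₐ I n x)) =
      Ideal.quotientMap (J ^ m) φ ((Ideal.pow_right_mono h m).trans (Ideal.le_comap_pow φ m))
        (evalₐ I m x) := by
  rw [← factorPow_evalₐ hle x]
  obtain ⟨y, hy⟩ := Ideal.Quotient.mk_surjective (evalₐ I n x)
  rw [← hy]
  rfl

def mapOfLEComap (φ : A →+* B) (h : I ≤ J.comap φ) :
    AdicCompletion I A →+* AdicCompletion J B :=
  liftRingHom J
    (fun n ↦ (Ideal.quotientMap (J ^ n) φ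
      ((Ideal.pow_right_mono h n).trans (Ideal.le_comap_pow φ n))).comp (evalₐ I n).toRingHom)
    (fun hle ↦ RingHom.ext (factorPow_quotientMap_evalₐ φ h hle))

theorem evalₐ_mapOfLEComap (φ : A →+* B) (h : I ≤ J.comap φ) (n : ℕ) (x : AdicCompletion I A) :
    evalₐ J n (mapOfLEComap φ h x) = Ideal.quotientMap (J ^ n) φ
      ((Ideal.pow_right_mono h n).trans (Ideal.le_comap_pow φ n)) (evalₐ I n x) :=
  evalₐ_liftRingHom J _ (fun hle ↦ RingHom.ext (factorPow_quotientMap_evalₐ φ h hle)) n x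

theorem mapOfLEComap_algebraMap (φ : A →+* B) (h : I ≤ J.comap φ) (x : A) :
    mapOfLEComap φ h (algebraMap A _ x) = algebraMap B _ (φ x) :=
  ext_evalₐ fun n ↦ by simp [evalₐ_mapOfLEComap, algebraMap_apply, Ideal.quotientMap_mk]

/-- A complete version of Nakayama's lemma reduces surjectivity to surjectivity modulo `I`. -/
theorem mapOfLEComap_surjective (φ : A →+* B) (hφ : Function.Surjective φ) (hI : I.FG) :
    Function.Surjective (mapOfLEComap φ (Ideal.le_comap_map (I := I) (f := φ))) := by
  set Ψ := mapOfLEComap φ (Ideal.le_comap_map (I := I) (f := φ))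
  have hpre : IsPrecomplete (I.map (algebraMap A (AdicCompletion I A))) (AdicCompletion I A) :=
    IsPrecomplete.map_algebraMap_iff.mpr (isAdicComplete hI).toIsPrecomplete
  have hmap : (I.map (algebraMap A (AdicCompletion I A))).map Ψ =
      (I.map φ).map (algebraMap B (AdicCompletion (I.map φ) B)) := by
    rw [Ideal.map_map, Ideal.map_map]
    exact congrArg I.map (RingHom.ext (mapOfLEComap_algebraMap φ Ideal.le_comap_map))
  have hhaus : IsHausdorff ((I.map (algebraMap A (AdicCompletion I A))).map Ψ)
      (AdicCompletion (I.map φ) B) := by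
    rw [hmap]
    exact IsHausdorff.map_algebraMap_iff.mpr inferInstance
  refine surjective_of_mk_map_comp_surjective (I := I.map (algebraMap A (AdicCompletion I A))) _
    fun y ↦ ?_
  obtain ⟨y, rfl⟩ := Ideal.Quotient.mk_surjective y
  obtain ⟨b, hb⟩ := Ideal.Quotient.mk_surjective (evalOneₐ (I.map φ) y)
  obtain ⟨a, rfl⟩ := hφ b
  refine ⟨algebraMap A _ a, ?_⟩
  rw [RingHom.comp_apply, mapOfLEComap_algebraMap, Ideal.Quotient.eq, hmap,
    ← ker_evalOneₐ_eq_map _ (hI.map φ)]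
  simp [RingHom.mem_ker, hb]

end Functoriality

variable {R : Type*} [CommRing R]

/-- `R̂` is the image of the power series ring `(R[X_s])^ ≅ R⟦X_s⟧` under `X_s ↦ s`, where `s`
generates `a`. -/
instance isNoetherianRing [IsNoetherianRing R] (a : Ideal R) :
    IsNoetherianRing (AdicCompletion a R) := by
  obtain ⟨s, hs⟩ := a.fg_of_isNoetherianRing
  let φ : MvPolynomial s R →+* R := (MvPolynomial.aeval ((↑) : s → R)).toRingHom
  have hφ : Function.Surjective φ := fun r ↦ ⟨MvPolynomial.C r, by simp [φ]⟩
  have hmap : (MvPolynomial.idealOfVars s R).map φ = a := by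
    rw [Ideal.map_span, ← Set.range_comp, ← hs]
    congr 1
    ext
    simp [φ]
  have := isNoetherianRing_of_ringEquiv _ (MvPowerSeries.toAdicCompletionAlgEquiv s R).toRingEquiv
  subst hmap
  exact isNoetherianRing_of_surjective _ _ _
    (mapOfLEComap_surjective φ hφ (MvPolynomial.idealOfVars_fg s R))

theorem exists_sub_algebraMap_mem_map_pow {a : Ideal R} (ha : a.FG) (n : ℕ)
    (x : AdicCompletion a R) :
    ∃ r : R, x - algebraMap R _ r ∈ (a ^ n).map (algebraMap R (AdicCompletion a R)) := by
  obtain ⟨r, hr⟩ := Submodule.Quotient.mk_surjective _ (x.val n)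
  refine ⟨r, ?_⟩
  rw [← Submodule.restrictScalars_mem R, ← Ideal.smul_top_eq_map, pow_smul_top_eq_ker_eval ha]
  simp only [LinearMap.mem_ker, map_sub, eval_apply, algebraMap_apply]
  rw [← hr]
  exact sub_self _

end AdicCompletion

namespace IsAdicTorsion

variable {R S J : Type u} [CommRing R] [CommRing S] [Algebra R S] [AddCommGroup J] [Module R J]
  [Module S J] [IsScalarTower R S J]

theorem map_algebraMap {a : Ideal R} (h : IsAdicTorsion R a J) :
    IsAdicTorsion S (a.map (algebraMap R S)) J := by
  intro x
  obtain ⟨n, hn⟩ := h x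
  refine ⟨n, fun s hs ↦ ?_⟩
  rw [← Ideal.map_pow] at hs
  have : (a ^ n).map (algebraMap R S) ≤ Ideal.torsionOf S J x :=
    Ideal.map_le_iff_le_comap.mpr fun r hr ↦ by simp [hn r hr]
  exact (Ideal.mem_torsionOf_iff _ _).mp (this hs)

theorem exists_pow_smul_eq_bot {b : Ideal S} (h : IsAdicTorsion S b J) {N : Submodule S J}
    (hN : N.FG) : ∃ n, b ^ n • N = ⊥ := by
  obtain ⟨s, rfl⟩ := hN
  choose n hn using h
  have hle : Submodule.span S s ≤ Submodule.torsionBySet S J ↑(b ^ s.sup n) :=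
    Submodule.span_le.mpr fun x hx ↦ (Submodule.mem_torsionBySet_iff _ _).mpr fun r ↦
      hn x r (Ideal.pow_le_pow_right (Finset.le_sup hx) r.2)
  refine ⟨s.sup n, eq_bot_iff.mpr (Submodule.smul_le.mpr fun r hr x hx ↦ ?_)⟩
  exact (Submodule.mem_torsionBySet_iff _ _).mp (hle hx) ⟨r, hr⟩

end IsAdicTorsion

theorem LinearMap.exists_map_eq_zero_of_mem_pow {S J : Type*} [CommRing S] [IsNoetherianRing S]
    [AddCommGroup J] [Module S J] (b : Ideal S) {I : Ideal S} (f : I →ₗ[S] J) {n : ℕ}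
    (hn : b ^ n • LinearMap.range f = ⊥) : ∃ m, ∀ z : I, (z : S) ∈ b ^ m → f z = 0 := by
  obtain ⟨k, hk⟩ := Ideal.exists_pow_inf_eq_pow_smul b (I : Submodule S S)
  refine ⟨k + n, fun z hz ↦ ?_⟩
  have hz' : (z : S) ∈ b ^ n • (I : Submodule S S) := by
    have : (z : S) ∈ b ^ (k + n) • ⊤ ⊓ (I : Submodule S S) := ⟨by simpa using hz, z.2⟩
    rw [hk _ (Nat.le_add_right k n), Nat.add_sub_cancel_left] at this
    exact Submodule.smul_mono le_rfl inf_le_right this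
  have : f z ∈ b ^ n • LinearMap.range f := by
    rw [LinearMap.range_eq_map, ← Submodule.map_smul'']
    exact Submodule.mem_map_of_mem ((Submodule.mem_smul_top_iff _ _ _).mpr hz')
  simpa [hn] using this

theorem Module.Injective.exists_extension_of_map_eq_zero {R : Type*} {S J : Type u} [CommRing R]
    [CommRing S] [Algebra R S] [AddCommGroup J] [Module R J] [Module S J] [IsScalarTower R S J]
    [Module.Injective R J] (b : Ideal R)
    (hb : ∀ x : S, ∃ r : R, x - algebraMap R S r ∈ b.map (algebraMap R S))
    {I : Ideal S} (f : I →ₗ[S] J) (hf : ∀ z : I, (z : S) ∈ b.map (algebraMap R S) → f z = 0) :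
    ∃ g : S →ₗ[S] J, ∀ x (hx : x ∈ I), g x = f ⟨x, hx⟩ := by
  set K := b.map (algebraMap R S)
  let θ : I →ₗ[R] S ⧸ K := (K.mkQ.restrictScalars R) ∘ₗ (I.subtype.restrictScalars R)
  have hker : LinearMap.ker θ ≤ LinearMap.ker (f.restrictScalars R) := fun z hz ↦
    hf z ((Submodule.Quotient.mk_eq_zero K).mp hz)
  obtain ⟨h, hh⟩ := Module.Injective.out ((LinearMap.ker θ).liftQ θ le_rfl)
    (LinearMap.ker_eq_bot.mp (Submodule.ker_liftQ_eq_bot _ _ _ le_rfl))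
    ((LinearMap.ker θ).liftQ (f.restrictScalars R) hker)
  have hhθ : ∀ z : I, h (θ z) = f z := fun z ↦ hh (Submodule.Quotient.mk z)
  set e := h 1
  have he : K ≤ Ideal.torsionOf S J e := Ideal.map_le_iff_le_comap.mpr fun r hr ↦ by
    have : r • (1 : S ⧸ K) = 0 := by
      rw [Algebra.smul_def, mul_one, ← Ideal.Quotient.mk_algebraMap,
        Ideal.Quotient.eq_zero_iff_mem]
      exact Ideal.mem_map_of_mem _ hr
    simp [e, ← map_smul, this]
  refine ⟨LinearMap.toSpanSingleton S J e, fun x hx ↦ ?_⟩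
  obtain ⟨r, hr⟩ := hb x
  have hθ : θ ⟨x, hx⟩ = r • 1 := by
    rw [Algebra.smul_def, mul_one, ← Ideal.Quotient.mk_algebraMap]
    exact Ideal.Quotient.eq.mpr hr
  calc x • e = algebraMap R S r • e + (x - algebraMap R S r) • e := by
        rw [← add_smul, add_sub_cancel]
    _ = h (r • 1) := by
        rw [(Ideal.mem_torsionOf_iff _ _).mp (he hr), add_zero, algebraMap_smul, map_smul]
    _ = f ⟨x, hx⟩ := by rw [← hθ, hhθ]

theorem injective_over_adicCompletion_general
    (R : Type u) [CommRing R] [IsNoetherianRing R] (a : Ideal R)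
    (J : Type u) [AddCommGroup J] [Module R J]
    (hinj : Module.Injective R J)
    (htor : IsAdicTorsion R a J) :
    ∀ χ : AdicCompletion a R →ₐ[R] Module.End R J,
      letI : Module (AdicCompletion a R) J := Module.compHom J χ.toRingHom
      Module.Injective (AdicCompletion a R) J := by
  intro χ
  let : Module (AdicCompletion a R) J := Module.compHom J χ.toRingHom
  have : IsScalarTower R (AdicCompletion a R) J := ⟨fun r s y ↦ by
    change χ (r • s) y = r • χ s y
    rw [Algebra.smul_def, map_mul, χ.commutes, Module.End.mul_apply,
      Module.algebraMap_end_apply]⟩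
  refine Module.Baer.injective fun I f ↦ ?_
  obtain ⟨n, hn⟩ := htor.map_algebraMap.exists_pow_smul_eq_bot
    (((Submodule.fg_top I).mpr (IsNoetherian.noetherian I)).map f)
  obtain ⟨m, hm⟩ := f.exists_map_eq_zero_of_mem_pow _ (by rwa [LinearMap.range_eq_map])
  exact Module.Injective.exists_extension_of_map_eq_zero (a ^ m)
    (AdicCompletion.exists_sub_algebraMap_mem_map_pow a.fg_of_isNoetherianRing m) f
    fun z hz ↦ hm z (by rwa [← Ideal.map_pow])

/-- Let `R` be commutative noetherian, `a` a proper ideal, and `J` an injective `R`-module that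
is `a`-torsion with `Ass_R(J) ⊆ V(a)`.  Then `J`, with its induced module structure over the
`a`-adic completion `R̂` (given by any `R`-algebra homomorphism `R̂ → End_R(J)`, which is
necessarily the canonical one), is an injective `R̂`-module. -/
theorem injective_over_adicCompletion
    (R : Type u) [CommRing R] [IsNoetherianRing R] (a : Ideal R) (ha : a ≠ ⊤)
    (J : Type u) [AddCommGroup J] [Module R J]
    (hinj : Module.Injective R J)
    (htor : IsAdicTorsion R a J)
    (hass : ∀ p ∈ associatedPrimes R J, a ≤ p) :
    ∀ χ : AdicCompletion a R →ₐ[R] Module.End R J,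
      letI : Module (AdicCompletion a R) J := Module.compHom J χ.toRingHom
      Module.Injective (AdicCompletion a R) J :=
  injective_over_adicCompletion_general R a J hinj htor

end
end

section
/- Let R be a commutative noetherian ring, a a proper ideal, and M an a-torsion R-module such that Ext^i_R(R/a, M) is finitely generated for all i, R̂ ≅ Hom_R(M, M) (as R-modules, where R̂ is the a-adic completion), and Ext^i_R(M, M) = 0 for all i ≥ 1. Then the homothety map χ : R̂ → Hom_R(M, M), r ↦ (x ↦ rx), is itself an isomorphism; i.e., any abstract isomorphism R̂ ≅ Hom_R(M,M) forces the homothety map to be an isomorphism. -/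
/-! An `R`-linear map from `R̂` to an `a`-adically separated module is determined by
the image of `1`: for finitely generated `a` the kernel of `R̂ → R ⧸ aⁿ` is `aⁿ • R̂`,
so `R` is dense in `R̂`. An abstract isomorphism `α : R̂ ≃ S` onto an `R`-algebra `S`
makes `S` separated, so this rigidity gives `α c = χ c * α 1` and puts the image of `χ`
in the centre of `S`. Hence `α 1` is a unit with inverse `χ (α⁻¹ 1)`, and
`χ = α · (α 1)⁻¹` is bijective. -/

open CategoryTheory

noncomputable section
universe u

/-- `Ext^i_R(M, N)`. -/
abbrev extMod (R : Type u) [CommRing R] (i : ℕ) (M N : Type u) [AddCommGroup M] [Module R M]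
    [AddCommGroup N] [Module R N] : ModuleCat R :=
  ((Ext R (ModuleCat.{u} R) i).obj (Opposite.op (ModuleCat.of R M))).obj (ModuleCat.of R N)

theorem IsHausdorff.of_injective {R M N : Type*} [CommRing R] [AddCommGroup M] [Module R M]
    [AddCommGroup N] [Module R N] {I : Ideal R} [IsHausdorff I N] (f : M →ₗ[R] N)
    (hf : Function.Injective f) : IsHausdorff I M where
  haus' x hx := hf <| (map_zero f).symm ▸ IsHausdorff.haus ‹_› (f x) fun n =>
    SModEq.zero.mpr <| Submodule.smul_top_le_comap_smul_top _ f (SModEq.zero.mp (hx n))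

namespace AdicCompletion

variable {R : Type*} [CommRing R] {a : Ideal R}

theorem exists_sub_algebraMap_mem_pow_smul_top (ha : a.FG) (c : AdicCompletion a R) (n : ℕ) :
    ∃ r : R, c - algebraMap R _ r ∈ (a ^ n • ⊤ : Submodule R (AdicCompletion a R)) := by
  obtain ⟨r, hr⟩ := Submodule.Quotient.mk_surjective _ (eval a R n c)
  refine ⟨r, ?_⟩
  rw [pow_smul_top_eq_ker_eval ha, LinearMap.mem_ker, map_sub, algebraMap_apply,
    Algebra.algebraMap_self, RingHom.id_apply, eval_of, ← hr, Submodule.mkQ_apply, sub_self]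

theorem linearMap_ext_of_isHausdorff (ha : a.FG) {E : Type*} [AddCommGroup E] [Module R E]
    [IsHausdorff a E] {f g : AdicCompletion a R →ₗ[R] E} (h : f 1 = g 1) : f = g := by
  refine LinearMap.ext fun c => (IsHausdorff.eq_iff_smodEq (I := a)).mpr fun n => ?_
  obtain ⟨r, hr⟩ := exists_sub_algebraMap_mem_pow_smul_top ha c n
  have hr' : f (algebraMap R _ r) = g (algebraMap R _ r) := by
    rw [Algebra.algebraMap_eq_smul_one, map_smul, map_smul, h]
  have : f c - g c = (f - g) (c - algebraMap R _ r) := by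
    rw [map_sub, LinearMap.sub_apply, LinearMap.sub_apply, hr', sub_self, sub_zero]
  rw [SModEq.sub_mem, this]
  exact Submodule.smul_top_le_comap_smul_top _ (f - g) hr

theorem _root_.AlgHom.bijective_of_linearEquiv_adicCompletion (ha : a.FG) {S : Type*} [Ring S]
    [Algebra R S] (α : AdicCompletion a R ≃ₗ[R] S) (χ : AdicCompletion a R →ₐ[R] S) :
    Function.Bijective χ := by
  have : IsHausdorff a S := .of_injective α.symm.toLinearMap α.symm.injective
  have hα (c) : α c = χ c * α 1 := LinearMap.congr_fun
    (linearMap_ext_of_isHausdorff ha (f := α.toLinearMap)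
      (g := LinearMap.mulRight R (α 1) ∘ₗ χ.toLinearMap) (by simp)) c
  have hcomm (c s) : χ c * s = s * χ c := LinearMap.congr_fun
    (linearMap_ext_of_isHausdorff ha (f := LinearMap.mulRight R s ∘ₗ χ.toLinearMap)
      (g := LinearMap.mulLeft R s ∘ₗ χ.toLinearMap) (by simp)) c
  have hinv : χ (α.symm 1) * α 1 = 1 := by rw [← hα, α.apply_symm_apply]
  let u : Sˣ := ⟨χ (α.symm 1), α 1, hinv, by rw [← hcomm, hinv]⟩
  have : ⇑χ = (· * (u : S)) ∘ α := funext fun c => by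
    change χ c = α c * χ (α.symm 1)
    rw [hα, mul_assoc, ← hcomm, hinv, mul_one]
  rw [this]
  exact (Units.mulRight_bijective u).comp α.bijective

end AdicCompletion

theorem homothety_bijective_of_abstract_iso_general
    (R : Type u) [CommRing R] [IsNoetherianRing R] (a : Ideal R)
    (M : Type u) [AddCommGroup M] [Module R M]
    (hiso : Nonempty (AdicCompletion a R ≃ₗ[R] Module.End R M)) :
    ∀ χ : AdicCompletion a R →ₐ[R] Module.End R M, Function.Bijective χ :=
  fun χ => hiso.elim
    (χ.bijective_of_linearEquiv_adicCompletion (IsNoetherian.noetherian a))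

/-- Let `R` be commutative noetherian, `a` a proper ideal, and `M` an `a`-torsion `R`-module
such that `Ext^i_R(R/a, M)` is finitely generated for all `i`, there is an abstract `R`-module
isomorphism `R̂ ≅ Hom_R(M, M)`, and `Ext^i_R(M, M) = 0` for `i ≥ 1`.  Then the homothety map
`χ : R̂ → Hom_R(M, M)` (i.e. any `R`-algebra homomorphism `R̂ → End_R(M)`, of which there is
exactly one since `M` is `a`-torsion) is itself an isomorphism. -/
theorem homothety_bijective_of_abstract_iso
    (R : Type u) [CommRing R] [IsNoetherianRing R] (a : Ideal R) (ha : a ≠ ⊤)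
    (M : Type u) [AddCommGroup M] [Module R M]
    (htor : IsAdicTorsion R a M)
    (hfin : ∀ i : ℕ, Module.Finite R (extMod R i (R ⧸ a) M))
    (hiso : Nonempty (AdicCompletion a R ≃ₗ[R] Module.End R M))
    (hext : ∀ i : ℕ, 1 ≤ i → Subsingleton (extMod R i M M)) :
    ∀ χ : AdicCompletion a R →ₐ[R] Module.End R M, Function.Bijective χ :=
  homothety_bijective_of_abstract_iso_general R a M hiso

end
end

section
/- Let (R, m, k) be a local noetherian ring and suppose N is a finitely generated R-module such that the local cohomology of N is concentrated in degree 0 and H^0_m(N) ≅ E_R(k) (i.e., RΓ_m(N) ≃ E_R(k) as complexes). Then R is artinian, N is a dualizing module for R (R is Cohen–Macaulay of dimension 0 and N is a canonical module), and in particular N itself is m-torsion with N ≅ E_R(k). -/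
open CategoryTheory

noncomputable section
universe u

/-- `E` is an injective hull of the residue field `k` of a local ring `R`. -/
def IsInjectiveHullOfResidueField (R : Type u) [CommRing R] [IsLocalRing R]
    (E : Type u) [AddCommGroup E] [Module R E] : Prop :=
  Module.Injective R E ∧
  ∃ f : IsLocalRing.ResidueField R →ₗ[R] E, Function.Injective f ∧
    ∀ N : Submodule R E, N ≠ ⊥ → N ⊓ LinearMap.range f ≠ ⊥

/-! Since `N` is noetherian, the chain `(0 :_N m^n)` stabilizes at some `c`, so
`H⁰_m(N) = colim_n Hom_R(R/m^n, N)` is `(0 :_N m^c)` and `E ≅ H⁰_m(N)` is killed by `m^c`.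
But `E_R(k)` is faithful: for `r ≠ 0` the map `Rr ≅ R/ann(r) → k → E` extends to `R` by
injectivity, and the extension `g` has `r • g 1 ≠ 0`. Hence `m^c = 0`, so `R` is artinian,
`N = (0 :_N m^c)` and `N ≅ H⁰_m(N) ≅ E`. -/

open CategoryTheory.Limits Opposite localCohomology IsLocalRing

-- Left exactness of `Hom(-, M)`: this is what makes `Ext⁰(-, M) ≅ Hom(-, M)`.
instance {R : Type u} [CommRing R] (M : ModuleCat.{u} R) :
    PreservesFiniteColimits ((linearYoneda R (ModuleCat.{u} R)).obj M).rightOp :=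
  have : PreservesFiniteLimits ((linearYoneda R (ModuleCat.{u} R)).obj M ⋙ forget _) :=
    preservesFiniteLimits_of_natIso (Iso.refl (yoneda.obj M))
  have : PreservesFiniteLimits ((linearYoneda R (ModuleCat.{u} R)).obj M) :=
    preservesFiniteLimits_of_reflects_of_preserves _ (forget _)
  preservesFiniteColimits_rightOp _

namespace Submodule

variable {R : Type u} [CommRing R] (M : Type*) [AddCommGroup M] [Module R M]

def quotLinearMapEquivTorsionBySet (I : Ideal R) :
    (R ⧸ I →ₗ[R] M) ≃ₗ[R] torsionBySet R M I where
  toFun g := ⟨g (Quotient.mk 1), (mem_torsionBySet_iff _ _).mpr fun ⟨r, hr⟩ => by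
    rw [← map_smul, ← Quotient.mk_smul, smul_eq_mul, mul_one,
      (Quotient.mk_eq_zero I).mpr hr, map_zero]⟩
  invFun x := I.liftQ (LinearMap.toSpanSingleton R M x) fun r hr =>
    (mem_torsionBySet_iff _ _).mp x.2 ⟨r, hr⟩
  map_add' _ _ := rfl
  map_smul' _ _ := rfl
  left_inv g := linearMap_qext _ <| LinearMap.ext fun r => by
    show r • g (Quotient.mk 1) = g (Quotient.mk r)
    rw [← map_smul, ← Quotient.mk_smul, smul_eq_mul, mul_one]
  right_inv x := Subtype.ext <| one_smul R (x : M)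

lemma exists_torsionBySet_pow_le [IsNoetherian R M] (J : Ideal R) :
    ∃ c, ∀ n, torsionBySet R M ↑(J ^ n) ≤ torsionBySet R M ↑(J ^ c) := by
  let f : ℕ →o Submodule R M := ⟨fun n => torsionBySet R M ↑(J ^ n), fun _ _ hab =>
    torsionBySet_le_torsionBySet_of_subset (Ideal.pow_le_pow_right hab)⟩
  obtain ⟨c, hc⟩ := monotone_stabilizes_iff_noetherian.mpr inferInstance f
  exact ⟨c, fun n => (le_total n c).elim (fun h => f.monotone h) (fun h => (hc n h).ge)⟩

end Submodule

namespace localCohomology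

variable {R : Type u} [CommRing R] (J : Ideal R) (M : ModuleCat.{u} R)

def homDiagram : ℕᵒᵖᵒᵖ ⥤ ModuleCat.{u} R :=
  (ringModIdeals (idealPowersDiagram J)).op ⋙ (linearYoneda R (ModuleCat.{u} R)).obj M

def zeroIsoColimitHomDiagram : (localCohomology J 0).obj M ≅ colimit (homDiagram J M) :=
  have := hasColimitDiagram.{u, 0} (idealPowersDiagram J) 0
  colimitObjIsoColimitCompEvaluation _ M ≪≫ HasColimit.isoOfNatIso
    (Functor.isoWhiskerLeft (ringModIdeals (idealPowersDiagram J)).op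
      (Functor.isoWhiskerRight
        (NatIso.op ((linearYoneda R (ModuleCat.{u} R)).obj M).rightOp.leftDerivedZeroIsoSelf).symm
        (unopUnop _)))

def homDiagramObjEquiv (n : ℕ) :
    (homDiagram J M).obj (op (op n)) ≃ₗ[R] Submodule.torsionBySet R M ↑(J ^ n) :=
  ModuleCat.homLinearEquiv ≪≫ₗ Submodule.quotLinearMapEquivTorsionBySet M (J ^ n)

lemma homDiagramObjEquiv_map {k l : ℕ} (h : k ≤ l) (g : (homDiagram J M).obj (op (op k))) :
    (homDiagramObjEquiv J M l ((homDiagram J M).map (homOfLE h).op.op g) : M) =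
      homDiagramObjEquiv J M k g :=
  rfl

lemma cocone_ι_app_apply_eq_of_homDiagramObjEquiv_eq (s : Cocone (homDiagram J M)) {k l : ℕ}
    (g : (homDiagram J M).obj (op (op k))) (g' : (homDiagram J M).obj (op (op l)))
    (h : (homDiagramObjEquiv J M k g : M) = homDiagramObjEquiv J M l g') :
    s.ι.app (op (op k)) g = s.ι.app (op (op l)) g' := by
  rw [← s.w (homOfLE (le_max_left k l)).op.op, ← s.w (homOfLE (le_max_right k l)).op.op]
  refine congrArg (s.ι.app (op (op (max k l)))).hom
    ((homDiagramObjEquiv J M _).injective (Subtype.ext ?_))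
  exact (homDiagramObjEquiv_map J M _ g).trans (h.trans (homDiagramObjEquiv_map J M _ g').symm)

section TorsionCocone

variable {J M} {c : ℕ}
  (hc : ∀ n, Submodule.torsionBySet R M ↑(J ^ n) ≤ Submodule.torsionBySet R M ↑(J ^ c))

def torsionCocone : Cocone (homDiagram J M) where
  pt := ModuleCat.of R (Submodule.torsionBySet R M ↑(J ^ c))
  ι.app n := ModuleCat.ofHom <|
    Submodule.inclusion (hc _) ∘ₗ (homDiagramObjEquiv J M (unop (unop n))).toLinearMap
  ι.naturality := by
    rintro ⟨⟨k⟩⟩ ⟨⟨l⟩⟩ w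
    have hkl : k ≤ l := leOfHom w.unop.unop
    obtain rfl : (homOfLE hkl).op.op = w := Subsingleton.elim _ _
    ext g
    exact Subtype.ext (homDiagramObjEquiv_map J M hkl g)

def isColimitTorsionCocone : IsColimit (torsionCocone hc) where
  desc s := ModuleCat.ofHom <|
    (s.ι.app (op (op c))).hom ∘ₗ (homDiagramObjEquiv J M c).symm.toLinearMap
  fac s := by
    rintro ⟨⟨n⟩⟩
    ext g
    exact cocone_ι_app_apply_eq_of_homDiagramObjEquiv_eq J M s _ _ <|
      congrArg Subtype.val ((homDiagramObjEquiv J M c).apply_symm_apply _)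
  uniq s m hm := by
    ext x
    rw [← hm (op (op c))]
    exact congrArg m.hom ((homDiagramObjEquiv J M c).apply_symm_apply x).symm

end TorsionCocone

theorem exists_zero_equiv_torsionBySet_pow (N : Type u) [AddCommGroup N] [Module R N]
    [IsNoetherian R N] :
    ∃ c : ℕ, Nonempty ((localCohomology J 0).obj (.of R N) ≃ₗ[R]
      Submodule.torsionBySet R N ↑(J ^ c)) := by
  obtain ⟨c, hc⟩ := Submodule.exists_torsionBySet_pow_le N J
  let e : (localCohomology J 0).obj (.of R N) ≅ (torsionCocone (M := .of R N) hc).pt :=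
    zeroIsoColimitHomDiagram J _ ≪≫
      colimit.isoColimitCocone ⟨_, isColimitTorsionCocone (M := .of R N) hc⟩
  exact ⟨c, ⟨e.toLinearEquiv⟩⟩

end localCohomology

theorem Module.annihilator_eq_bot_of_injective_of_residueField {R : Type u} [CommRing R]
    [IsLocalRing R] {E : Type u} [AddCommGroup E] [Module R E] [Module.Injective R E]
    {f : ResidueField R →ₗ[R] E} (hf : Function.Injective f) :
    Module.annihilator R E = ⊥ := by
  refine (Submodule.eq_bot_iff _).mpr fun r hr => by_contra fun hr0 => ?_
  have hann : Ideal.torsionOf R R r ≤ maximalIdeal R := by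
    refine le_maximalIdeal fun htop => hr0 ?_
    have h1 : (1 : R) ∈ Ideal.torsionOf R R r := htop ▸ Submodule.mem_top
    rwa [Ideal.mem_torsionOf_iff, one_smul] at h1
  let φ : R ⧸ Ideal.torsionOf R R r →ₗ[R] E :=
    Submodule.liftQ _ (LinearMap.toSpanSingleton R E (f 1)) fun s hs => by
      rw [LinearMap.mem_ker, LinearMap.toSpanSingleton_apply, ← map_smul, Algebra.smul_def,
        mul_one, ResidueField.algebraMap_eq, (residue_eq_zero_iff s).mpr (hann hs), map_zero]
  obtain ⟨g, hg⟩ := Module.Injective.extension_property R E _ _ (R ∙ r).subtype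
    Subtype.val_injective (φ ∘ₗ (Ideal.quotTorsionOfEquivSpanSingleton R R r).symm.toLinearMap)
  have he : (Ideal.quotTorsionOfEquivSpanSingleton R R r).symm
      ⟨r, Submodule.mem_span_singleton_self r⟩ = Submodule.Quotient.mk 1 := by
    rw [LinearEquiv.symm_apply_eq, Ideal.quotTorsionOfEquivSpanSingleton_apply_mk, one_smul]
  have hgr : g r = f 1 := by
    rw [← one_smul R (f 1)]
    exact (LinearMap.congr_fun hg ⟨r, Submodule.mem_span_singleton_self r⟩).trans
      (congrArg φ he)
  have hr1 : r • g 1 = 0 := Module.mem_annihilator.mp hr _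
  rw [← map_smul, smul_eq_mul, mul_one, hgr] at hr1
  exact one_ne_zero (hf (hr1.trans (map_zero f).symm))

theorem dualizing_of_localCohomology_eq_injectiveHull_general
    (R : Type u) [CommRing R] [IsLocalRing R] [IsNoetherianRing R]
    (E : Type u) [AddCommGroup E] [Module R E]
    (hE : IsInjectiveHullOfResidueField R E)
    (N : Type u) [AddCommGroup N] [Module R N] [Module.Finite R N]
    (h0 : Nonempty
      (((localCohomology (IsLocalRing.maximalIdeal R) 0).obj (ModuleCat.of R N)) ≃ₗ[R] E)) :
    IsArtinianRing R ∧ IsAdicTorsion R (IsLocalRing.maximalIdeal R) N ∧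
    Nonempty (N ≃ₗ[R] E) := by
  obtain ⟨_, f, hf, -⟩ := hE
  obtain ⟨c, ⟨e⟩⟩ := localCohomology.exists_zero_equiv_torsionBySet_pow (maximalIdeal R) N
  have hc : maximalIdeal R ^ c = ⊥ := by
    have hann := (h0.some.symm ≪≫ₗ e).annihilator_eq
    rw [Module.annihilator_eq_bot_of_injective_of_residueField hf] at hann
    exact le_bot_iff.mp (hann ▸ (Module.isTorsionBySet_iff_subset_annihilator _ _).mp
      (Submodule.torsionBySet_isTorsionBySet _))
  have htors : Module.IsTorsionBySet R N ↑(maximalIdeal R ^ c) := fun x r => by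
    have hr : (r : R) ∈ (⊥ : Ideal R) := hc ▸ r.2
    rw [(Submodule.mem_bot R).mp hr, zero_smul]
  refine ⟨(isArtinianRing_iff_isNilpotent_maximalIdeal R).mpr ⟨c, hc⟩,
    fun x => ⟨c, fun r hr => @htors x ⟨r, hr⟩⟩, ⟨?_⟩⟩
  have htop := (Module.isTorsionBySet_iff_torsionBySet_eq_top _).mp htors
  exact (LinearEquiv.ofTop _ htop).symm ≪≫ₗ e.symm ≪≫ₗ h0.some

/-- Let `(R, m, k)` be a local noetherian ring, `E = E_R(k)`, and `N` a finitely generated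
`R`-module with `H^0_m(N) ≅ E` and `H^i_m(N) = 0` for `i > 0` (i.e. `RΓ_m(N) ≃ E`).  Then `R`
is artinian, `N` is `m`-torsion, and `N ≅ E_R(k)` (so `N` is a dualizing module for the
zero-dimensional Cohen–Macaulay ring `R`). -/
theorem dualizing_of_localCohomology_eq_injectiveHull
    (R : Type u) [CommRing R] [IsLocalRing R] [IsNoetherianRing R]
    (E : Type u) [AddCommGroup E] [Module R E]
    (hE : IsInjectiveHullOfResidueField R E)
    (N : Type u) [AddCommGroup N] [Module R N] [Module.Finite R N]
    (h0 : Nonempty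
      (((localCohomology (IsLocalRing.maximalIdeal R) 0).obj (ModuleCat.of R N)) ≃ₗ[R] E))
    (hpos : ∀ i : ℕ, 0 < i →
      Subsingleton ((localCohomology (IsLocalRing.maximalIdeal R) i).obj (ModuleCat.of R N))) :
    IsArtinianRing R ∧ IsAdicTorsion R (IsLocalRing.maximalIdeal R) N ∧
    Nonempty (N ≃ₗ[R] E) :=
  dualizing_of_localCohomology_eq_injectiveHull_general R E hE N h0

end
end
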